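/- Consider an instance of the strongly stable matching problem with closures containing doctors d₁, d₂ ∈ D and hospitals h₁, t, f ∈ H such that t, f ∈ S, h₁ ∉ S, E(d₁) = {(d₁,h₁)}, E(d₂) = {(d₂,t), (d₂,f), (d₂,h₁)}, E(h₁) = {(d₁,h₁), (d₂,h₁)}, and the preferences satisfy (d₁,h₁) ∼_{h₁} (d₂,h₁) and (d₂,t) ∼_{d₂} (d₂,f) ≻_{d₂} (d₂,h₁). Then every stable matching μ in G contains exactly one of the edges (d₂,t) and (d₂,f). -/

import Mathlib

open Classical

variable {D H : Type}

def edgesD (E : Set (D × H)) (d : D) : Set (D × H) := {e ∈ E | e.1 = d}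

def edgesH (E : Set (D × H)) (h : H) : Set (D × H) := {e ∈ E | e.2 = h}

def optD (E : Set (D × H)) (d : D) : Set (Option (D × H)) :=
  insert none (some '' edgesD E d)

def optH (E : Set (D × H)) (h : H) : Set (Option (D × H)) :=
  insert none (some '' edgesH E h)

/-- An instance of the strongly stable matching problem with closures:
a bipartite graph between doctors `D` and hospitals `H` with edge set `E`,
a set `S` of closable hospitals, and for each vertex a transitive, total
preference relation on its incident edges together with `∅` (modelled by
`Option`, where `none` plays the role of `∅`), such that every incident
edge is strictly preferred to `∅`. -/
structure SSMC (D H : Type) where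
  E : Set (D × H)
  S : Set H
  prefD : D → Option (D × H) → Option (D × H) → Prop
  prefH : H → Option (D × H) → Option (D × H) → Prop
  prefD_trans : ∀ d, ∀ e ∈ optD E d, ∀ f ∈ optD E d, ∀ g ∈ optD E d,
    prefD d e f → prefD d f g → prefD d e g
  prefD_total : ∀ d, ∀ e ∈ optD E d, ∀ f ∈ optD E d, prefD d e f ∨ prefD d f e
  prefD_none : ∀ d, ∀ e ∈ edgesD E d, prefD d (some e) none ∧ ¬ prefD d none (some e)
  prefH_trans : ∀ h, ∀ e ∈ optH E h, ∀ f ∈ optH E h, ∀ g ∈ optH E h,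
    prefH h e f → prefH h f g → prefH h e g
  prefH_total : ∀ h, ∀ e ∈ optH E h, ∀ f ∈ optH E h, prefH h e f ∨ prefH h f e
  prefH_none : ∀ h, ∀ e ∈ edgesH E h, prefH h (some e) none ∧ ¬ prefH h none (some e)

namespace SSMC

variable (I : SSMC D H)

/-- `e ≻_d f` -/
def strictD (d : D) (e f : Option (D × H)) : Prop := I.prefD d e f ∧ ¬ I.prefD d f e

/-- `e ∼_d f` -/
def simD (d : D) (e f : Option (D × H)) : Prop := I.prefD d e f ∧ I.prefD d f e

/-- `e ≻_h f` -/
def strictH (h : H) (e f : Option (D × H)) : Prop := I.prefH h e f ∧ ¬ I.prefH h f e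

/-- `e ∼_h f` -/
def simH (h : H) (e f : Option (D × H)) : Prop := I.prefH h e f ∧ I.prefH h f e

/-- A matching: a subset of `E` with at most one edge at each vertex. -/
def isMatching (μ : Set (D × H)) : Prop :=
  μ ⊆ I.E ∧ (∀ e ∈ μ, ∀ f ∈ μ, e.1 = f.1 → e = f) ∧
    (∀ e ∈ μ, ∀ f ∈ μ, e.2 = f.2 → e = f)

end SSMC

/-- `μ(d)`: the edge of `μ` at doctor `d` (or `none`). -/
noncomputable def muD (μ : Set (D × H)) (d : D) : Option (D × H) :=
  if h : ∃ e, e ∈ μ ∧ e.1 = d then some h.choose else none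

/-- `μ(h)`: the edge of `μ` at hospital `h` (or `none`). -/
noncomputable def muH (μ : Set (D × H)) (h : H) : Option (D × H) :=
  if hh : ∃ e, e ∈ μ ∧ e.2 = h then some hh.choose else none

namespace SSMC

variable (I : SSMC D H)

/-- `e` blocks the matching `μ`: `e ∈ E \ μ`, `e` weakly blocks `μ` on both of its
endpoints and strongly blocks `μ` on at least one of them (where blocking on a
hospital `h ∈ S` additionally requires `μ(h) ≠ ∅`). -/
def blocks (μ : Set (D × H)) (e : D × H) : Prop :=
  e ∈ I.E ∧ e ∉ μ ∧
  I.prefD e.1 (some e) (muD μ e.1) ∧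
  (I.prefH e.2 (some e) (muH μ e.2) ∧ (e.2 ∈ I.S → muH μ e.2 ≠ none)) ∧
  (I.strictD e.1 (some e) (muD μ e.1) ∨
    (I.strictH e.2 (some e) (muH μ e.2) ∧ (e.2 ∈ I.S → muH μ e.2 ≠ none)))

/-- A stable matching: no edge blocks it. -/
def stable (μ : Set (D × H)) : Prop :=
  I.isMatching μ ∧ ∀ e, ¬ I.blocks μ e

/-- `Ch_D(F)`: union over doctors `d` of the most preferred edges of `F(d)`. -/
def ChD (F : Set (D × H)) : Set (D × H) :=
  {e ∈ F | ∀ f ∈ F, f.1 = e.1 → I.prefD e.1 (some e) (some f)}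

/-- `Ch_H(F)`: union over hospitals `h` of the most preferred edges of `F(h)`. -/
def ChH (F : Set (D × H)) : Set (D × H) :=
  {e ∈ F | ∀ f ∈ F, f.2 = e.2 → I.prefH e.2 (some e) (some f)}

/-- `Ch(F) = Ch_H(Ch_D(F))`. -/
def Ch (F : Set (D × H)) : Set (D × H) := I.ChH (I.ChD F)

/-- `e ≻_d F` for a flat set `F`. -/
def dSucc (F : Set (D × H)) (e : D × H) : Prop :=
  (∀ f ∈ F, f.1 ≠ e.1) ∨ ∃ f ∈ F, f.1 = e.1 ∧ I.strictD e.1 (some e) (some f)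

/-- `e ∼_d F` for a flat set `F`. -/
def dSim (F : Set (D × H)) (e : D × H) : Prop :=
  ∃ f ∈ F, f.1 = e.1 ∧ I.simD e.1 (some e) (some f)

/-- `block(F)` for a flat set `F ⊆ E`. -/
def setBlock (F : Set (D × H)) : Set (D × H) :=
  {e | e ∈ I.E ∧ e ∉ F ∧ (∃ f ∈ F, f.2 = e.2) ∧
    (I.dSucc F e ∨ I.dSim F e) ∧
    (I.dSucc F e → ∃ f ∈ F, f.2 = e.2 ∧ I.prefH e.2 (some e) (some f)) ∧
    (I.dSim F e → ∃ f ∈ F, f.2 = e.2 ∧ I.strictH e.2 (some e) (some f))}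

/-- `L = Ch(E \ R)`. -/
def Lset (R : Set (D × H)) : Set (D × H) := I.Ch (I.E \ R)

/-- The pre-processing conditions (R1)–(R5) on a pair `(R, μ)`. -/
def preproc (R μ : Set (D × H)) : Prop :=
  R ⊆ I.E ∧ I.isMatching μ ∧
  -- (R1)
  (∀ σ, I.stable σ → ∀ e ∈ R, e ∉ σ) ∧
  -- (R2)
  μ ⊆ I.Ch (I.E \ R) ∧
  -- (R3)
  (∀ d : D, (∃ e ∈ I.E \ R, e.1 = d) → ∃ e ∈ μ, e.1 = d) ∧
  -- (R4)
  R ∩ I.setBlock (I.Ch (I.E \ R)) = ∅ ∧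
  -- (R5)
  (∀ d : D, ∀ e ∈ R, e.1 = d → ∀ f ∈ I.E \ R, f.1 = d → I.prefD d (some e) (some f))

/-- `h` is a critical hospital with respect to `(R, μ)`. -/
def critical (R μ : Set (D × H)) (h : H) : Prop :=
  h ∉ I.S ∧ (∀ e ∈ μ, e.2 ≠ h) ∧
  ((∃ e ∈ I.Ch (I.E \ R), e.2 = h) ∨ (∃ e ∈ R, e.2 = h))

/-- Assumption (★): every doctor strictly prefers any acceptable hospital
outside `S` to any acceptable hospital in `S`. -/
def starAssumption : Prop :=
  ∀ (d : D) (h h' : H), (d, h) ∈ I.E → (d, h') ∈ I.E → h ∈ I.S → h' ∉ I.S →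
    I.strictD d (some (d, h')) (some (d, h))

end SSMC

/-!
If `d₂` were unmatched, `(d₂,h₁)` would block, because `h₁ ∉ S` and `h₁` is indifferent
between its two doctors. If `d₂` were matched to `h₁`, then `d₁`, whose only hospital is `h₁`,
would be unmatched and `(d₁,h₁)` would block. So `d₂` is matched along `(d₂,t)` or `(d₂,f)`,
and not both since `μ` is a matching.
-/

lemma muH_eq_some {μ : Set (D × H)} (hμ : Set.InjOn Prod.snd μ) {e : D × H} (he : e ∈ μ) :
    muH μ e.2 = some e := by
  have hex : ∃ e', e' ∈ μ ∧ e'.2 = e.2 := ⟨e, he, rfl⟩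
  rw [muH, dif_pos hex]
  exact congrArg some (hμ hex.choose_spec.1 he hex.choose_spec.2)

lemma muD_eq_none {μ : Set (D × H)} {d : D} (h : ∀ e ∈ μ, e.1 ≠ d) : muD μ d = none :=
  dif_neg fun ⟨e, he, hed⟩ => h e he hed

lemma notMem_of_muD_eq_none {μ : Set (D × H)} {e : D × H} (h : muD μ e.1 = none) : e ∉ μ :=
  fun he => by rw [muD, dif_pos ⟨e, he, rfl⟩] at h; cases h

lemma mem_of_muH_eq_some {μ : Set (D × H)} {h : H} {e : D × H} (hm : muH μ h = some e) :
    e ∈ μ ∧ e.2 = h := by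
  unfold muH at hm
  split_ifs at hm with hex
  exact Option.some_injective _ hm ▸ hex.choose_spec

namespace SSMC

variable {I : SSMC D H} {μ : Set (D × H)}

lemma blocks_of_muD_eq_none {e : D × H} (he : e ∈ I.E) (hd : muD μ e.1 = none)
    (hS : e.2 ∉ I.S) (hh : I.prefH e.2 (some e) (muH μ e.2)) : I.blocks μ e := by
  have hnone := I.prefD_none e.1 e ⟨he, rfl⟩
  rw [blocks, hd]
  exact ⟨he, notMem_of_muD_eq_none hd, hnone.1, ⟨hh, fun h => absurd h hS⟩, Or.inl hnone⟩

lemma stable.exists_mem_fst_eq (hμ : I.stable μ) {e : D × H} (he : e ∈ I.E) (hS : e.2 ∉ I.S)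
    (hpref : ∀ g ∈ edgesH I.E e.2, g.1 ≠ e.1 → I.prefH e.2 (some e) (some g)) :
    ∃ g ∈ μ, g.1 = e.1 := by
  by_contra! hfree
  refine hμ.2 e (blocks_of_muD_eq_none he (muD_eq_none hfree) hS ?_)
  cases hm : muH μ e.2 with
  | none => exact (I.prefH_none e.2 e ⟨he, rfl⟩).1
  | some g =>
    obtain ⟨hg, hge⟩ := mem_of_muH_eq_some hm
    exact hpref g ⟨hμ.1.1 hg, hge⟩ (hfree g hg)

/-- Were `e` in `μ`, the doctor `d` would lose its only hospital `g.2`, and `g` would block. -/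
lemma stable.notMem_of_edgesD_eq_singleton (hμ : I.stable μ) {d : D} {g e : D × H}
    (hE : edgesD I.E d = {g}) (hS : g.2 ∉ I.S) (heg : e.2 = g.2) (hed : e.1 ≠ d)
    (hpref : I.prefH g.2 (some g) (some e)) : e ∉ μ := by
  have hg : g ∈ edgesD I.E d := hE ▸ rfl
  intro he
  refine hμ.2 g (blocks_of_muD_eq_none hg.1 (muD_eq_none ?_) hS ?_)
  · intro g' hg' hg'd
    have : g' ∈ edgesD I.E g.1 := ⟨hμ.1.1 hg', hg'd⟩
    rw [hg.2, hE] at this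
    subst this
    exact hed (hg.2 ▸ congrArg Prod.fst (hμ.1.2.2 _ he _ hg' heg))
  · rwa [← heg, muH_eq_some hμ.1.2.2 he, heg]

end SSMC

theorem variable_gadget_general {D H : Type}
    (I : SSMC D H) (d₁ d₂ : D) (h₁ t f : H)
    (hd : d₁ ≠ d₂) (htf : t ≠ f)
    (hh₁S : h₁ ∉ I.S)
    (hE1 : edgesD I.E d₁ = {(d₁, h₁)})
    (hE2 : edgesD I.E d₂ = {(d₂, t), (d₂, f), (d₂, h₁)})
    (hEh1 : edgesH I.E h₁ = {(d₁, h₁), (d₂, h₁)})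
    (hp1 : I.simH h₁ (some (d₁, h₁)) (some (d₂, h₁))) :
    ∀ μ : Set (D × H), I.stable μ →
      (((d₂, t) ∈ μ ∧ (d₂, f) ∉ μ) ∨ ((d₂, f) ∈ μ ∧ (d₂, t) ∉ μ)) := by
  intro μ hμ
  have hE21 : (d₂, h₁) ∈ I.E := (hEh1.symm ▸ Or.inr rfl : (d₂, h₁) ∈ edgesH I.E h₁).1
  obtain ⟨e, he, hed⟩ : ∃ e ∈ μ, e.1 = d₂ := by
    refine hμ.exists_mem_fst_eq (e := (d₂, h₁)) hE21 hh₁S fun g hg hgd => ?_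
    rw [hEh1] at hg
    obtain rfl | rfl := hg
    exacts [hp1.2, absurd rfl hgd]
  have hd₂h₁ : (d₂, h₁) ∉ μ :=
    hμ.notMem_of_edgesD_eq_singleton hE1 hh₁S rfl hd.symm hp1.1
  have : e ∈ edgesD I.E d₂ := ⟨hμ.1.1 he, hed⟩
  rw [hE2] at this
  obtain rfl | rfl | rfl := this
  · exact Or.inl ⟨he, fun hf => htf (congrArg Prod.snd (hμ.1.2.1 _ he _ hf rfl))⟩
  · exact Or.inr ⟨he, fun ht => htf (congrArg Prod.snd (hμ.1.2.1 _ ht _ he rfl))⟩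
  · exact absurd he hd₂h₁

/-- variable gadget: in an instance containing doctors
`d₁, d₂` and hospitals `h₁, t, f` with `t, f ∈ S`, `h₁ ∉ S`,
`E(d₁) = {(d₁,h₁)}`, `E(d₂) = {(d₂,t),(d₂,f),(d₂,h₁)}`,
`E(h₁) = {(d₁,h₁),(d₂,h₁)}`, preferences `(d₁,h₁) ∼_{h₁} (d₂,h₁)` and
`(d₂,t) ∼_{d₂} (d₂,f) ≻_{d₂} (d₂,h₁)`, every stable matching contains exactly
one of `(d₂,t)` and `(d₂,f)`. -/
theorem variable_gadget {D H : Type} [Fintype D] [Fintype H]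
    (I : SSMC D H) (d₁ d₂ : D) (h₁ t f : H)
    (hd : d₁ ≠ d₂) (htf : t ≠ f) (hth : t ≠ h₁) (hfh : f ≠ h₁)
    (htS : t ∈ I.S) (hfS : f ∈ I.S) (hh₁S : h₁ ∉ I.S)
    (hE1 : edgesD I.E d₁ = {(d₁, h₁)})
    (hE2 : edgesD I.E d₂ = {(d₂, t), (d₂, f), (d₂, h₁)})
    (hEh1 : edgesH I.E h₁ = {(d₁, h₁), (d₂, h₁)})
    (hp1 : I.simH h₁ (some (d₁, h₁)) (some (d₂, h₁)))
    (hp2 : I.simD d₂ (some (d₂, t)) (some (d₂, f)))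
    (hp3 : I.strictD d₂ (some (d₂, f)) (some (d₂, h₁))) :
    ∀ μ : Set (D × H), I.stable μ →
      (((d₂, t) ∈ μ ∧ (d₂, f) ∉ μ) ∨ ((d₂, f) ∈ μ ∧ (d₂, t) ∉ μ)) :=
  variable_gadget_general I d₁ d₂ h₁ t f hd htf hh₁S hE1 hE2 hEh1 hp1
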